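/- arXiv:1502.02569 — 2 statements merged into one kernel-verified Lean document; each statement's English description precedes it below -/
import Mathlib

section
/- For all integers w, t, I, and α with t ≥ 0, α ≥ 0, w + α ≥ 0, and I ≥ 1, the recurrence Q(w, t+1, I, α) = Q(w, t, I, α) + Q(w, t, I, α+1) holds. -/
/-!
Pascal's rule `C(a+1,b) = C(a,b) + C(a,b-1)` in the upper index splits each summand of
`Q(w,t+1,I,α)` into the corresponding summands of `Q(w,t,I,α)` and `Q(w,t,I,α+1)`.
Summandwise this is exact for the first sum and for the third sum when `α ≥ 1`; the second sum
(and the third when `α = 0`) is left with a telescoping remainder, which leaves only its boundary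
term at `i = w + 1`. For `α ≥ 1` the third sum of `Q(w,t,I,α+1)` has one summand more, at
`i = α`, and trinomial revision `C(r,k) C(r-k,n-k) = C(n,k) C(r,n)` shows that it cancels the
boundary term; for `α = 0` the two boundary terms cancel on the nose.
-/

/-- The generalized binomial coefficient `C(a,b)` for integers `a`, `b`:
`C(a,b) = 0` if `b < 0`, and `C(a,b) = a(a-1)⋯(a-b+1)/b!` if `b ≥ 0`. -/
noncomputable def binom (a b : ℤ) : ℤ := if b < 0 then 0 else Ring.choose a b.toNat

/-- The integer `Q(w,t,I,α)` from Definition 3.1 of the paper (intended for `0 ≤ α`). -/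
noncomputable def Q (w t I α : ℤ) : ℤ :=
  if α = 0 then
    -(∑ᶠ i : ℤ, binom (I - 1) (w - i) * binom (i + I - w - 2) i * binom t (I - i))
    + (∑ᶠ i ∈ Set.Iic w,
        ((i + w + 1).negOnePow : ℤ) * binom (2 * i - w - 2 + t) (2 * i - w - 1) * binom t (I - i))
    + (∑ᶠ i ∈ Set.Iic w,
        ((i + w).negOnePow : ℤ) * binom (t + i - 1) i * binom t (I - i))
  else
    -(∑ᶠ i : ℤ, binom (I - 1) (w - i) * binom (i + I - w - 2) i * binom t (I - i - α))
    + (∑ᶠ i ∈ Set.Iic w,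
        ((i + w + 1 + α).negOnePow : ℤ) * binom (2 * i - w - 2 + t + α) (2 * i - w - 1 + α) *
          binom t (I - i - α))
    + (∑ i ∈ Finset.Icc (1 : ℤ) (α - 1),
        ((i + 1).negOnePow : ℤ) * binom (I - 1) (w + i) * binom (t + w + i) (I - α + i))

open Finset

lemma binom_eq_zero_of_neg (a : ℤ) {b : ℤ} (h : b < 0) : binom a b = 0 := if_pos h

lemma binom_natCast_right (a : ℤ) (k : ℕ) : binom a k = Ring.choose a k := by
  simp [binom]

lemma binom_eq_zero_of_lt {a b : ℤ} (ha : 0 ≤ a) (h : a < b) : binom a b = 0 := by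
  lift a to ℕ using ha
  lift b to ℕ using by omega
  rw [binom_natCast_right, Ring.choose_natCast, Nat.choose_eq_zero_of_lt (by omega), Nat.cast_zero]

lemma binom_succ_left (a b : ℤ) : binom (a + 1) b = binom a b + binom a (b - 1) := by
  rcases lt_trichotomy b 0 with hb | rfl | hb
  · simp [binom_eq_zero_of_neg _ hb, binom_eq_zero_of_neg _ (show b - 1 < 0 by omega)]
  · simp [binom]
  · lift b to ℕ using hb.le
    obtain ⟨k, rfl⟩ := Nat.exists_eq_add_of_lt (Nat.cast_pos.mp hb)
    rw [zero_add, Nat.cast_add_one, add_sub_cancel_right, ← Nat.cast_add_one, binom_natCast_right,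
      binom_natCast_right, binom_natCast_right, Ring.choose_succ_succ, add_comm]

lemma binom_succ_mul_binom_succ (x m t s : ℤ) :
    binom (x + 1) m * binom (t + 1) s
      = binom x m * binom t s + binom x (m - 1) * binom t s
        + binom (x + 1) m * binom t (s - 1) := by
  rw [binom_succ_left x, binom_succ_left t]
  ring

lemma binom_mul_binom (r k n : ℤ) :
    binom r k * binom (r - k) (n - k) = binom n k * binom r n := by
  rcases lt_or_ge k 0 with hk | hk
  · rw [binom_eq_zero_of_neg r hk, binom_eq_zero_of_neg n hk, zero_mul, zero_mul]
  rcases lt_or_ge n k with hn | hn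
  · rw [binom_eq_zero_of_neg _ (show n - k < 0 by omega), mul_zero]
    rcases lt_or_ge n 0 with hn0 | hn0
    · rw [binom_eq_zero_of_neg r hn0, mul_zero]
    · rw [binom_eq_zero_of_lt hn0 hn, zero_mul]
  lift k to ℕ using hk
  lift n to ℕ using by omega
  rw [← Nat.cast_sub (by omega), binom_natCast_right, binom_natCast_right, binom_natCast_right,
    binom_natCast_right, Ring.choose_natCast, ← Ring.choose_smul_choose r (by omega),
    nsmul_eq_mul]

lemma finsum_mem_Iic_eq_sum_Icc {M : Type*} [AddCommMonoid M] {f : ℤ → M} {L : ℤ}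
    (hf : ∀ i < L, f i = 0) (w : ℤ) : ∑ᶠ i ∈ Set.Iic w, f i = ∑ i ∈ Icc L w, f i := by
  refine finsum_mem_eq_sum_of_inter_support_eq f (Set.ext fun i ↦ ?_)
  simp only [Set.mem_inter_iff, Set.mem_Iic, Function.mem_support, coe_Icc, Set.mem_Icc]
  exact ⟨fun ⟨hi, hfi⟩ ↦ ⟨⟨not_lt.mp (mt (hf i) hfi), hi⟩, hfi⟩,
    fun ⟨⟨_, hi⟩, hfi⟩ ↦ ⟨hi, hfi⟩⟩

lemma sum_Icc_sub_add_one {M : Type*} [AddCommGroup M] (f : ℤ → M) {L w : ℤ}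
    (h : L ≤ w + 1) :
    ∑ i ∈ Icc L w, (f i - f (i + 1)) = f L - f (w + 1) := by
  induction w, (show L - 1 ≤ w by omega) using Int.leInduction with
  | base => simp
  | succ n hn ih =>
    rw [← insert_Icc_right_eq_Icc_add_one (by omega), sum_insert (by simp), ih (by omega)]
    abel

section summands

variable (w t I α i : ℤ)

noncomputable def summandA : ℤ :=
  binom (I - 1) (w - i) * binom (i + I - w - 2) i * binom t (I - i - α)

noncomputable def summandB : ℤ :=
  ((i + w + 1 + α).negOnePow : ℤ) * binom (2 * i - w - 2 + t + α) (2 * i - w - 1 + α) *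
    binom t (I - i - α)

noncomputable def potentialB : ℤ :=
  ((i + w + 1 + α).negOnePow : ℤ) * binom (2 * i - w - 2 + t + α) (2 * i - w - 2 + α) *
    binom t (I - i - α)

noncomputable def summandC : ℤ :=
  ((i + 1).negOnePow : ℤ) * binom (I - 1) (w + i) * binom (t + w + i) (I - α + i)

noncomputable def summandC₀ : ℤ :=
  ((i + w).negOnePow : ℤ) * binom (t + i - 1) i * binom t (I - i)

noncomputable def potentialC₀ : ℤ :=
  ((i + w).negOnePow : ℤ) * binom (t + i - 1) (i - 1) * binom t (I - i)

lemma summandA_succ :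
    summandA w (t + 1) I α i = summandA w t I α i + summandA w t I (α + 1) i := by
  simp only [summandA]
  linear_combination (norm := ring_nf)
    binom (I - 1) (w - i) * binom (i + I - w - 2) i * binom_succ_left t (I - i - α)

lemma summandB_succ :
    summandB w (t + 1) I α i = summandB w t I α i + summandB w t I (α + 1) i
      + (potentialB w t I α i - potentialB w t I α (i + 1)) := by
  have h := binom_succ_mul_binom_succ (2 * i - w - 2 + t + α) (2 * i - w - 1 + α) t (I - i - α)
  have h' := binom_succ_left (2 * i - w - 2 + t + α + 1) (2 * i - w - 1 + α + 1)
  simp only [summandB, potentialB]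
  rw [show i + w + 1 + (α + 1) = i + w + 1 + α + 1 by ring,
    show i + 1 + w + 1 + α = i + w + 1 + α + 1 by ring, Int.negOnePow_succ, Units.val_neg]
  linear_combination (norm := ring_nf)
    ((i + w + 1 + α).negOnePow : ℤ) * (h - binom t (I - i - α - 1) * h')

lemma summandC_succ :
    summandC w (t + 1) I α i = summandC w t I α i + summandC w t I (α + 1) i := by
  simp only [summandC]
  linear_combination (norm := ring_nf)
    ((i + 1).negOnePow : ℤ) * binom (I - 1) (w + i) * binom_succ_left (t + w + i) (I - α + i)

lemma summandC₀_succ :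
    summandC₀ w (t + 1) I i
      = summandC₀ w t I i + (potentialC₀ w t I i - potentialC₀ w t I (i + 1)) := by
  have h := binom_succ_mul_binom_succ (t + i - 1) i t (I - i)
  simp only [summandC₀, potentialC₀, add_right_comm i 1 w, Int.negOnePow_succ, Units.val_neg]
  linear_combination (norm := ring_nf) ((i + w).negOnePow : ℤ) * h

lemma summandB_eq_zero_of_lt (h : 2 * i < w + 1 - α) : summandB w t I α i = 0 := by
  rw [summandB, binom_eq_zero_of_neg _ (by omega), mul_zero, zero_mul]

lemma potentialB_eq_zero_of_lt (h : 2 * i < w + 2 - α) : potentialB w t I α i = 0 := by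
  rw [potentialB, binom_eq_zero_of_neg _ (by omega), mul_zero, zero_mul]

lemma potentialB_add_one_self :
    potentialB w t I α (w + 1)
      = (α.negOnePow : ℤ) * binom (t + w + α) (w + α) * binom t (I - w - 1 - α) := by
  rw [potentialB, show w + 1 + w + 1 + α = 2 * (w + 1) + α by ring, Int.negOnePow_add,
    Int.negOnePow_two_mul, one_mul]
  ring_nf

lemma summandC₀_eq_zero_of_neg (h : i < 0) : summandC₀ w t I i = 0 := by
  rw [summandC₀, binom_eq_zero_of_neg _ h, mul_zero, zero_mul]

lemma potentialC₀_eq_zero_of_nonpos (h : i ≤ 0) : potentialC₀ w t I i = 0 := by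
  rw [potentialC₀, binom_eq_zero_of_neg _ (by omega), mul_zero, zero_mul]

lemma potentialC₀_add_one_self :
    potentialC₀ w t I (w + 1) = -(binom (t + w) w * binom t (I - w - 1)) := by
  rw [potentialC₀, show w + 1 + w = 2 * w + 1 by ring, Int.negOnePow_two_mul_add_one,
    Units.val_neg, Units.val_one]
  ring_nf

end summands

section sums

variable (w t I α : ℤ)

noncomputable def sumA : ℤ := ∑ᶠ i : ℤ, summandA w t I α i

noncomputable def sumB : ℤ := ∑ᶠ i ∈ Set.Iic w, summandB w t I α i

noncomputable def sumC : ℤ := ∑ i ∈ Icc 1 (α - 1), summandC w t I α i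

noncomputable def sumC₀ : ℤ := ∑ᶠ i ∈ Set.Iic w, summandC₀ w t I i

lemma Q_of_ne_zero (hα : α ≠ 0) :
    Q w t I α = -sumA w t I α + sumB w t I α + sumC w t I α := by
  rw [Q, if_neg hα]
  rfl

lemma Q_zero : Q w t I 0 = -sumA w t I 0 + sumB w t I 0 + sumC₀ w t I := by
  simp [Q, sumA, sumB, sumC₀, summandA, summandB, summandC₀]

lemma support_summandA_subset : Function.support (summandA w t I α) ⊆ Icc 0 w := by
  intro i hi
  rw [coe_Icc, Set.mem_Icc]
  by_contra h
  rcases not_and_or.mp h with h | h <;> apply hi <;> simp only [summandA]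
  · rw [binom_eq_zero_of_neg _ (not_le.mp h), mul_zero, zero_mul]
  · rw [binom_eq_zero_of_neg _ (show w - i < 0 by omega), zero_mul, zero_mul]

lemma sumA_succ : sumA w (t + 1) I α = sumA w t I α + sumA w t I (α + 1) := by
  simp only [sumA, finsum_eq_sum_of_support_subset _ (support_summandA_subset ..)]
  rw [← sum_add_distrib]
  exact sum_congr rfl fun i _ ↦ summandA_succ ..

lemma sumB_succ :
    sumB w (t + 1) I α = sumB w t I α + sumB w t I (α + 1)
      - (α.negOnePow : ℤ) * binom (t + w + α) (w + α) * binom t (I - w - 1 - α) := by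
  obtain ⟨L, hLw, hL⟩ : ∃ L, L ≤ w + 1 ∧ 2 * L < w - α :=
    ⟨min (w + 1) ((w - α) / 2 - 1), by omega, by omega⟩
  have hB : ∀ t α', α' ≤ α + 1 → ∀ i < L, summandB w t I α' i = 0 :=
    fun t α' _ i _ ↦ summandB_eq_zero_of_lt _ _ _ _ _ (by omega)
  rw [sumB, sumB, sumB, finsum_mem_Iic_eq_sum_Icc (hB (t + 1) α (by omega)),
    finsum_mem_Iic_eq_sum_Icc (hB t α (by omega)), finsum_mem_Iic_eq_sum_Icc (hB t (α + 1) le_rfl)]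
  simp only [summandB_succ, sum_add_distrib, sum_Icc_sub_add_one _ hLw,
    potentialB_eq_zero_of_lt w t I α L (by omega), potentialB_add_one_self]
  ring

lemma sumC_succ (hα : 1 ≤ α) :
    sumC w (t + 1) I α = sumC w t I α + sumC w t I (α + 1)
      + (α.negOnePow : ℤ) * binom (I - 1) (w + α) * binom (t + w + α) (I - 1) := by
  have hIcc : Icc 1 (α + 1 - 1) = insert α (Icc 1 (α - 1)) := by
    ext; simp only [mem_Icc, mem_insert]; omega
  have hlast : summandC w t I (α + 1) α
      = -((α.negOnePow : ℤ) * binom (I - 1) (w + α) * binom (t + w + α) (I - 1)) := by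
    rw [summandC, Int.negOnePow_succ, Units.val_neg, show I - (α + 1) + α = I - 1 by ring]
    ring
  rw [sumC, sumC, sumC, hIcc, sum_insert (by simp), hlast]
  simp only [summandC_succ, sum_add_distrib]
  ring

lemma sumC_one : sumC w t I 1 = 0 := by
  simp [sumC]

lemma sumC₀_succ :
    sumC₀ w (t + 1) I = sumC₀ w t I + binom (t + w) w * binom t (I - w - 1) := by
  have hL : min (w + 1) 0 ≤ w + 1 := min_le_left ..
  have hC : ∀ t, ∀ i < min (w + 1) 0, summandC₀ w t I i = 0 :=
    fun t i _ ↦ summandC₀_eq_zero_of_neg _ _ _ _ (by omega)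
  rw [sumC₀, sumC₀, finsum_mem_Iic_eq_sum_Icc (hC _), finsum_mem_Iic_eq_sum_Icc (hC _)]
  simp only [summandC₀_succ, sum_add_distrib, sum_Icc_sub_add_one _ hL,
    potentialC₀_eq_zero_of_nonpos w t I _ (min_le_right ..), potentialC₀_add_one_self]
  ring

end sums

theorem Q_recurrence_general (w t I α : ℤ) (hα : 0 ≤ α) :
    Q w (t + 1) I α = Q w t I α + Q w t I (α + 1) := by
  obtain rfl | hα := hα.eq_or_lt
  · rw [Q_zero, Q_zero, sumA_succ, sumB_succ, sumC₀_succ, zero_add,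
      Q_of_ne_zero w t I 1 one_ne_zero, sumC_one]
    simp only [Int.negOnePow_zero, Units.val_one, one_mul, add_zero, sub_zero]
    ring
  · rw [Q_of_ne_zero w (t + 1) I α hα.ne', Q_of_ne_zero w t I α hα.ne',
      Q_of_ne_zero w t I (α + 1) (by omega), sumA_succ, sumB_succ, sumC_succ w t I α hα]
    linear_combination (norm := ring_nf)
      (α.negOnePow : ℤ) * (binom_mul_binom (t + w + α) (w + α) (I - 1)).symm

theorem Q_recurrence (w t I α : ℤ) (ht : 0 ≤ t) (hα : 0 ≤ α) (hwα : 0 ≤ w + α) (hI : 1 ≤ I) :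
    Q w (t + 1) I α = Q w t I α + Q w t I (α + 1) :=
  Q_recurrence_general w t I α hα
end

section
/- Let a, b, and c be integers with 0 ≤ a. Then Σ_{k∈ℤ} (−1)^k · C(b+k, c+k) · C(a, k) = (−1)^a · C(b, a+c). (The sum is finite: all terms with k < 0 or k > a vanish.) -/
lemma binom_of_neg (a b : ℤ) (h : b < 0) : binom a b = 0 := if_pos h

lemma binom_natCast (n k : ℕ) : binom (n : ℤ) (k : ℤ) = (n.choose k : ℤ) := by
  simp [binom, Ring.choose_natCast]

lemma binom_pascal (x m : ℤ) :
    binom (x + 1) (m + 1) = binom x m + binom x (m + 1) := by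
  rcases lt_trichotomy m (-1) with h | h | h
  · rw [binom_of_neg _ _ (by omega), binom_of_neg _ _ (by omega),
      binom_of_neg _ _ (by omega)]
    ring
  · subst h
    simp [binom, binom_of_neg x (-1) (by norm_num)]
  · have hm : 0 ≤ m := by omega
    have h1 : ¬ (m + 1 < 0) := by omega
    have h2 : ¬ (m < 0) := by omega
    have h3 : (m + 1).toNat = m.toNat + 1 := by omega
    simp only [binom, if_neg h1, if_neg h2, h3]
    exact Ring.choose_succ_succ x m.toNat

lemma key_sum (n : ℕ) : ∀ b c : ℤ,
    ∑ k ∈ Finset.range (n + 1),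
      ((-1 : ℤ) ^ k * binom (b + k) (c + k) * (n.choose k : ℤ)) =
    (-1 : ℤ) ^ n * binom b (n + c) := by
  induction n with
  | zero => intro b c; simp
  | succ n ih =>
    intro b c
    have hsplit :
        ∑ k ∈ Finset.range (n + 1 + 1),
          ((-1 : ℤ) ^ k * binom (b + k) (c + k) * ((n + 1).choose k : ℤ)) =
        (∑ k ∈ Finset.range (n + 1),
          ((-1 : ℤ) ^ (k + 1) * binom (b + (k + 1)) (c + (k + 1)) *
            ((n.choose k : ℤ) + (n.choose (k + 1) : ℤ)))) +
        binom b c := by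
      rw [Finset.sum_range_succ' (fun k =>
        (-1 : ℤ) ^ k * binom (b + k) (c + k) * ((n + 1).choose k : ℤ)) (n + 1)]
      simp [Nat.choose_succ_succ, mul_add]
    rw [hsplit]
    have hdistrib :
        ∑ k ∈ Finset.range (n + 1),
          ((-1 : ℤ) ^ (k + 1) * binom (b + (k + 1)) (c + (k + 1)) *
            ((n.choose k : ℤ) + (n.choose (k + 1) : ℤ))) =
        (∑ k ∈ Finset.range (n + 1),
          ((-1 : ℤ) ^ (k + 1) * binom (b + (k + 1)) (c + (k + 1)) * (n.choose k : ℤ))) +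
        ∑ k ∈ Finset.range (n + 1),
          ((-1 : ℤ) ^ (k + 1) * binom (b + (k + 1)) (c + (k + 1)) * (n.choose (k + 1) : ℤ)) := by
      rw [← Finset.sum_add_distrib]; congr 1; ext k; ring
    rw [hdistrib]
    have h1 : ∑ k ∈ Finset.range (n + 1),
        ((-1 : ℤ) ^ (k + 1) * binom (b + (k + 1)) (c + (k + 1)) * (n.choose k : ℤ)) =
        -((-1 : ℤ) ^ n * binom (b + 1) (n + (c + 1))) := by
      rw [← ih (b + 1) (c + 1)]
      rw [← Finset.sum_neg_distrib]
      congr 1; ext k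
      have e1 : b + ((k : ℤ) + 1) = b + 1 + (k : ℤ) := by ring
      have e2 : c + ((k : ℤ) + 1) = c + 1 + (k : ℤ) := by ring
      rw [e1, e2, pow_succ]
      ring
    have h2 : ∑ k ∈ Finset.range (n + 1),
        ((-1 : ℤ) ^ (k + 1) * binom (b + (k + 1)) (c + (k + 1)) * (n.choose (k + 1) : ℤ)) =
        (-1 : ℤ) ^ n * binom b (n + c) - binom b c := by
      have := Finset.sum_range_succ' (fun k =>
        (-1 : ℤ) ^ k * binom (b + k) (c + k) * (n.choose k : ℤ)) (n + 1)
      have hlast : ∑ k ∈ Finset.range (n + 1 + 1),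
          ((-1 : ℤ) ^ k * binom (b + k) (c + k) * (n.choose k : ℤ)) =
          ∑ k ∈ Finset.range (n + 1),
          ((-1 : ℤ) ^ k * binom (b + k) (c + k) * (n.choose k : ℤ)) := by
        rw [Finset.sum_range_succ]
        simp [Nat.choose_succ_self]
      rw [hlast, ih b c] at this
      simp only [Nat.cast_ofNat, Nat.cast_zero, add_zero, Nat.choose_zero_right,
        Nat.cast_one, mul_one, one_mul] at this
      push_cast at this ⊢
      linarith [this]
    rw [h1, h2]
    have hp : binom (b + 1) (n + c + 1) = binom b (n + c) + binom b (n + c + 1) :=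
      binom_pascal b (n + c)
    have e3 : (n : ℤ) + (c + 1) = n + c + 1 := by ring
    have e4 : ((n + 1 : ℕ) : ℤ) + c = n + c + 1 := by push_cast; ring
    rw [e3, e4, hp, pow_succ]
    ring

theorem alternating_binom_identity (a b c : ℤ) (ha : 0 ≤ a) :
    (∑ᶠ k : ℤ, (k.negOnePow : ℤ) * binom (b + k) (c + k) * binom a k) =
      (a.negOnePow : ℤ) * binom b (a + c) := by
  obtain ⟨n, rfl⟩ := Int.eq_ofNat_of_zero_le ha
  have hsupp : Function.support
      (fun k : ℤ => (k.negOnePow : ℤ) * binom (b + k) (c + k) * binom (n : ℤ) k) ⊆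
      (Finset.Icc (0 : ℤ) (n : ℤ) : Set ℤ) := by
    intro k hk
    simp only [Function.mem_support, ne_eq] at hk
    simp only [Finset.coe_Icc, Set.mem_Icc]
    by_contra hcon
    push_neg at hcon
    apply hk
    rcases lt_or_ge k 0 with h | h
    · rw [binom_of_neg _ _ h]; ring
    · have hkn : (n : ℤ) < k := hcon h
      obtain ⟨m, rfl⟩ := Int.eq_ofNat_of_zero_le h
      rw [binom_natCast, Nat.choose_eq_zero_of_lt (by exact_mod_cast hkn)]
      push_cast; ring
  rw [finsum_eq_sum_of_support_subset _ hsupp]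
  have hb : ∑ k ∈ Finset.Icc (0 : ℤ) (n : ℤ),
      ((k.negOnePow : ℤ) * binom (b + k) (c + k) * binom (n : ℤ) k) =
      ∑ k ∈ Finset.range (n + 1),
      ((-1 : ℤ) ^ k * binom (b + k) (c + k) * (n.choose k : ℤ)) := by
    refine Finset.sum_nbij' (fun k => k.toNat) (fun k => (k : ℤ)) ?_ ?_ ?_ ?_ ?_
    · intro k hk; simp only [Finset.mem_Icc] at hk; simp; omega
    · intro k hk; simp only [Finset.mem_range] at hk; simp; omega
    · intro k hk; simp only [Finset.mem_Icc] at hk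
      show ((k.toNat : ℤ)) = k; omega
    · intro k hk; simp
    · intro k hk
      simp only [Finset.mem_Icc] at hk
      obtain ⟨m, rfl⟩ := Int.eq_ofNat_of_zero_le hk.1
      rw [binom_natCast]
      simp [Int.coe_negOnePow_natCast]
  rw [hb, key_sum n b c, Int.coe_negOnePow_natCast]
end
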